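/- arXiv:2106.06685 — 3 statements merged into one kernel-verified Lean document; each statement's English description precedes it below -/
import Mathlib

section
/- The multiclass Fisher-Rao distance reduces to the binary formula when M = 2: for p = (1/(1+e^h), e^h/(1+e^h)) and q = (1/(1+e^{h'}), e^{h'}/(1+e^{h'})), one has 2·arccos(√(p₁q₁) + √(p₂q₂)) = 2|arctan(e^{h'/2}) − arctan(e^{h/2})|. -/
open Real

lemma cos_arctan_exp (h : ℝ) :
    Real.cos (Real.arctan (Real.exp (h / 2))) = 1 / Real.sqrt (1 + Real.exp h) := by
  rw [Real.cos_arctan]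
  congr 2
  rw [sq, ← Real.exp_add]
  ring_nf

lemma sin_arctan_exp (h : ℝ) :
    Real.sin (Real.arctan (Real.exp (h / 2))) = Real.exp (h / 2) / Real.sqrt (1 + Real.exp h) := by
  rw [Real.sin_arctan]
  congr 2
  rw [sq, ← Real.exp_add]
  ring_nf

/-- The multiclass Fisher-Rao distance reduces to the binary formula when `M = 2`. -/
theorem fisher_rao_binary_consistency (h h' : ℝ) :
    2 * Real.arccos
        (Real.sqrt ((1 / (1 + Real.exp h)) * (1 / (1 + Real.exp h'))) +
         Real.sqrt ((Real.exp h / (1 + Real.exp h)) * (Real.exp h' / (1 + Real.exp h'))))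
      = 2 * |Real.arctan (Real.exp (h' / 2)) - Real.arctan (Real.exp (h / 2))| := by
  set a := Real.arctan (Real.exp (h / 2)) with ha
  set b := Real.arctan (Real.exp (h' / 2)) with hb
  have h1 : (0:ℝ) < 1 + Real.exp h := by positivity
  have h2 : (0:ℝ) < 1 + Real.exp h' := by positivity
  have sqexp : ∀ x : ℝ, Real.sqrt (Real.exp x) = Real.exp (x / 2) := by
    intro x
    rw [show Real.exp x = Real.exp (x/2) ^ 2 by rw [sq, ← Real.exp_add]; ring_nf,
      Real.sqrt_sq (Real.exp_pos _).le]
  have e1 : Real.sqrt ((1 / (1 + Real.exp h)) * (1 / (1 + Real.exp h')))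
      = Real.cos a * Real.cos b := by
    rw [Real.sqrt_mul (by positivity), cos_arctan_exp, cos_arctan_exp,
      Real.sqrt_div zero_le_one, Real.sqrt_div zero_le_one, Real.sqrt_one]
  have e2 : Real.sqrt ((Real.exp h / (1 + Real.exp h)) * (Real.exp h' / (1 + Real.exp h')))
      = Real.sin a * Real.sin b := by
    rw [Real.sqrt_mul (by positivity), sin_arctan_exp, sin_arctan_exp,
      Real.sqrt_div (Real.exp_pos _).le, Real.sqrt_div (Real.exp_pos _).le, sqexp, sqexp]
  rw [e1, e2, ← Real.cos_sub, ← Real.cos_abs]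
  have hab : |a - b| ≤ π := by
    have haa := Real.arctan_lt_pi_div_two (Real.exp (h / 2))
    have hbb := Real.arctan_lt_pi_div_two (Real.exp (h' / 2))
    have ha0 : -(π/2) < a := Real.neg_pi_div_two_lt_arctan _
    have hb0 : -(π/2) < b := Real.neg_pi_div_two_lt_arctan _
    rw [abs_sub_le_iff]
    constructor <;> nlinarith [Real.pi_pos]
  rw [Real.arccos_cos (abs_nonneg _) hab, abs_sub_comm]
end

section
/- For a logistic model with h(x) = θᵀx, the Fisher-Rao distance between inputs x and x' satisfies d ≤ (1/2)|θᵀ(x'−x)| ≤ (ε/2)·‖θ‖₂ whenever ‖x'−x‖₂ ≤ ε. -/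
open Real
open scoped RealInnerProductSpace

lemma hasDerivAt_arctan_exp (t : ℝ) :
    HasDerivAt (fun t => arctan (exp t)) (exp t / (1 + exp t ^ 2)) t := by
  simpa only [one_div_mul_eq_div] using (hasDerivAt_exp t).arctan

lemma abs_div_one_add_sq_le_half (u : ℝ) : |u / (1 + u ^ 2)| ≤ 1 / 2 := by
  rw [abs_div, abs_of_pos (by positivity : (0 : ℝ) < 1 + u ^ 2), div_le_iff₀ (by positivity)]
  nlinarith [sq_abs u, sq_nonneg (|u| - 1)]

lemma abs_arctan_exp_sub_le (a b : ℝ) :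
    |arctan (exp a) - arctan (exp b)| ≤ |a - b| / 2 := by
  have := Convex.norm_image_sub_le_of_norm_hasDerivWithin_le
    (fun t _ => (hasDerivAt_arctan_exp t).hasDerivWithinAt)
    (fun t _ => abs_div_one_add_sq_le_half (exp t)) convex_univ (Set.mem_univ b) (Set.mem_univ a)
  simp only [Real.norm_eq_abs] at this
  linarith

/-- For the logistic model `h(x) = θᵀx`, the Fisher-Rao distance between inputs
`x` and `x'` satisfies `d ≤ |θᵀ(x'-x)|/2 ≤ ε ‖θ‖/2` whenever `‖x' - x‖ ≤ ε`. -/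
theorem fisher_rao_logistic_le {n : ℕ} (θ x x' : EuclideanSpace ℝ (Fin n)) (ε : ℝ)
    (h : ‖x' - x‖ ≤ ε) :
    2 * |Real.arctan (Real.exp (⟪θ, x'⟫ / 2)) - Real.arctan (Real.exp (⟪θ, x⟫ / 2))|
        ≤ |⟪θ, x' - x⟫| / 2 ∧
    |⟪θ, x' - x⟫| / 2 ≤ ε * ‖θ‖ / 2 := by
  constructor
  · have hhalf : |⟪θ, x'⟫ / 2 - ⟪θ, x⟫ / 2| = |⟪θ, x' - x⟫| / 2 := by
      rw [inner_sub_right, ← sub_div, abs_div, abs_two]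
    linarith [abs_arctan_exp_sub_le (⟪θ, x'⟫ / 2) (⟪θ, x⟫ / 2)]
  · have hcs : |⟪θ, x' - x⟫| ≤ ‖θ‖ * ε :=
      (abs_real_inner_le_norm θ (x' - x)).trans (mul_le_mul_of_nonneg_left h (norm_nonneg θ))
    linarith
end

section
/- Accuracy-robustness trade-off bounds: with Φ the standard normal CDF, Φ(ε/√λ_max + Φ⁻¹(P_e(θ))) ≤ P'_e(θ) ≤ Φ(ε/√λ_min + Φ⁻¹(P_e(θ))), where P_e(θ) = Φ(−θᵀμ/√(θᵀΣθ)) and P'_e(θ) = Φ((ε‖θ‖−θᵀμ)/√(θᵀΣθ)). -/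
/-!
Diagonalising `Σ = U diag(λ) Uᵀ` gives `θᵀΣθ = ∑ λᵢ yᵢ²` with `‖y‖ = ‖θ‖`, so
`λ_min ‖θ‖² ≤ θᵀΣθ ≤ λ_max ‖θ‖²`. Hence the robust margin `ε‖θ‖/√(θᵀΣθ)` lies between
`ε/√λ_max` and `ε/√λ_min`; adding it to `Φ⁻¹(P_e(θ)) = -θᵀμ/√(θᵀΣθ)` and applying the
monotone `Φ` gives both bounds.
-/

open Real

/-- The Euclidean (2-)norm of a vector in `ℝⁿ`. -/
noncomputable def vecNorm2 {n : ℕ} (θ : Fin n → ℝ) : ℝ :=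
  Real.sqrt (∑ i, θ i ^ 2)

/-- The dot product `⟪θ, μ⟫` of two vectors. -/
def vecDot {n : ℕ} (θ μ : Fin n → ℝ) : ℝ :=
  ∑ i, θ i * μ i

/-- The quadratic form `θᵀ Σ θ`. -/
def quadForm {n : ℕ} (S : Matrix (Fin n) (Fin n) ℝ) (θ : Fin n → ℝ) : ℝ :=
  ∑ i, ∑ j, θ i * S i j * θ j

open Matrix

namespace Matrix.IsHermitian

variable {ι : Type*} [Fintype ι] [DecidableEq ι] {A : Matrix ι ι ℝ} (hA : A.IsHermitian)
  (x : ι → ℝ)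

lemma vecMul_eigenvectorUnitary :
    x ᵥ* (hA.eigenvectorUnitary : Matrix ι ι ℝ) =
      star (hA.eigenvectorUnitary : Matrix ι ι ℝ) *ᵥ x := by
  rw [star_eq_conjTranspose, conjTranspose_eq_transpose_of_trivial, mulVec_transpose]

lemma dotProduct_mulVec_eq_sum_eigenvalues_mul_sq :
    x ⬝ᵥ (A *ᵥ x) =
      ∑ i, hA.eigenvalues i * (star (hA.eigenvectorUnitary : Matrix ι ι ℝ) *ᵥ x) i ^ 2 := by
  conv_lhs => rw [hA.spectral_theorem, Unitary.conjStarAlgAut_apply]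
  rw [← mulVec_mulVec, ← mulVec_mulVec, dotProduct_mulVec, vecMul_eigenvectorUnitary]
  simp only [dotProduct, mulVec_diagonal, Function.comp_apply, RCLike.ofReal_real_eq_id, id_eq]
  exact Finset.sum_congr rfl fun i _ => by ring

lemma dotProduct_self_eq_sum_sq_mulVec_eigenvectorUnitary :
    x ⬝ᵥ x = ∑ i, (star (hA.eigenvectorUnitary : Matrix ι ι ℝ) *ᵥ x) i ^ 2 := by
  set U : Matrix ι ι ℝ := (hA.eigenvectorUnitary : Matrix ι ι ℝ)
  have hUU : U * star U = 1 := mem_unitaryGroup_iff.mp hA.eigenvectorUnitary.2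
  have hvecMul : (star U *ᵥ x) ᵥ* star U = x := by
    rw [star_eq_conjTranspose, conjTranspose_eq_transpose_of_trivial, vecMul_transpose,
      mulVec_mulVec, ← conjTranspose_eq_transpose_of_trivial, ← star_eq_conjTranspose, hUU,
      one_mulVec]
  calc x ⬝ᵥ x = (star U *ᵥ x) ⬝ᵥ (star U *ᵥ x) := by rw [dotProduct_mulVec, hvecMul]
    _ = _ := by simp only [dotProduct, sq]

variable {x} {c : ℝ}

lemma mul_dotProduct_self_le_dotProduct_mulVec (h : ∀ i, c ≤ hA.eigenvalues i) :
    c * (x ⬝ᵥ x) ≤ x ⬝ᵥ (A *ᵥ x) := by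
  rw [hA.dotProduct_mulVec_eq_sum_eigenvalues_mul_sq,
    hA.dotProduct_self_eq_sum_sq_mulVec_eigenvectorUnitary, Finset.mul_sum]
  exact Finset.sum_le_sum fun i _ => mul_le_mul_of_nonneg_right (h i) (sq_nonneg _)

lemma dotProduct_mulVec_le_mul_dotProduct_self (h : ∀ i, hA.eigenvalues i ≤ c) :
    x ⬝ᵥ (A *ᵥ x) ≤ c * (x ⬝ᵥ x) := by
  rw [hA.dotProduct_mulVec_eq_sum_eigenvalues_mul_sq,
    hA.dotProduct_self_eq_sum_sq_mulVec_eigenvectorUnitary, Finset.mul_sum]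
  exact Finset.sum_le_sum fun i _ => mul_le_mul_of_nonneg_right (h i) (sq_nonneg _)

lemma inv_le_dotProduct_self_div_dotProduct_mulVec (h : ∀ i, hA.eigenvalues i ≤ c)
    (hx : 0 < x ⬝ᵥ (A *ᵥ x)) :
    c⁻¹ ≤ (x ⬝ᵥ x) / (x ⬝ᵥ (A *ᵥ x)) := by
  have hle := hA.dotProduct_mulVec_le_mul_dotProduct_self h (x := x)
  have hc : 0 < c :=
    pos_of_mul_pos_left (hx.trans_le hle) (Fintype.sum_nonneg fun i => mul_self_nonneg (x i))
  rw [le_div_iff₀ hx, inv_mul_le_iff₀ hc]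
  exact hle

lemma dotProduct_self_div_dotProduct_mulVec_le_inv (h : ∀ i, c ≤ hA.eigenvalues i)
    (hc : 0 < c) (hx : 0 < x ⬝ᵥ (A *ᵥ x)) :
    (x ⬝ᵥ x) / (x ⬝ᵥ (A *ᵥ x)) ≤ c⁻¹ := by
  rw [div_le_iff₀ hx, le_inv_mul_iff₀ hc]
  exact hA.mul_dotProduct_self_le_dotProduct_mulVec h

end Matrix.IsHermitian

lemma quadForm_eq_dotProduct_mulVec {n : ℕ} (S : Matrix (Fin n) (Fin n) ℝ) (θ : Fin n → ℝ) :
    quadForm S θ = θ ⬝ᵥ (S *ᵥ θ) := by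
  simp only [quadForm, dotProduct, mulVec, Finset.mul_sum, mul_assoc]

lemma vecNorm2_eq_sqrt_dotProduct_self {n : ℕ} (θ : Fin n → ℝ) :
    vecNorm2 θ = √(θ ⬝ᵥ θ) := by
  simp only [vecNorm2, dotProduct, sq]

theorem accuracy_robustness_tradeoff_general {n : ℕ}
    (Φ Φinv : ℝ → ℝ) (hΦ : StrictMono Φ)
    (hinv : ∀ x, Φinv (Φ x) = x)
    (S : Matrix (Fin n) (Fin n) ℝ) (hSym : S.IsHermitian) (hS : S.PosDef)
    (lmin lmax : ℝ)
    (hlmin : IsLeast (Set.range hSym.eigenvalues) lmin)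
    (hlmax : IsGreatest (Set.range hSym.eigenvalues) lmax)
    (θ μ : Fin n → ℝ) (hθ : θ ≠ 0) (ε : ℝ) (hε : 0 ≤ ε) :
    Φ (ε / Real.sqrt lmax
        + Φinv (Φ (-vecDot θ μ / Real.sqrt (quadForm S θ))))
      ≤ Φ ((ε * vecNorm2 θ - vecDot θ μ) / Real.sqrt (quadForm S θ)) ∧
    Φ ((ε * vecNorm2 θ - vecDot θ μ) / Real.sqrt (quadForm S θ))
      ≤ Φ (ε / Real.sqrt lmin
        + Φinv (Φ (-vecDot θ μ / Real.sqrt (quadForm S θ)))) := by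
  have hlmin_pos : 0 < lmin := by
    obtain ⟨i, rfl⟩ := hlmin.1
    exact hS.eigenvalues_pos i
  have hq : 0 < θ ⬝ᵥ (S *ᵥ θ) := by simpa using hS.re_dotProduct_pos hθ
  have hlow := hSym.inv_le_dotProduct_self_div_dotProduct_mulVec
    (fun i => hlmax.2 ⟨i, rfl⟩) hq
  have hupp := hSym.dotProduct_self_div_dotProduct_mulVec_le_inv
    (fun i => hlmin.2 ⟨i, rfl⟩) hlmin_pos hq
  have hsplit : (ε * vecNorm2 θ - vecDot θ μ) / √(quadForm S θ)
      = ε * √((θ ⬝ᵥ θ) / (θ ⬝ᵥ (S *ᵥ θ))) + -vecDot θ μ / √(quadForm S θ) := by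
    rw [Real.sqrt_div' _ hq.le, vecNorm2_eq_sqrt_dotProduct_self,
      quadForm_eq_dotProduct_mulVec]
    ring
  rw [hinv, hsplit, div_eq_mul_inv ε, div_eq_mul_inv ε, ← Real.sqrt_inv, ← Real.sqrt_inv]
  exact ⟨hΦ.monotone (by gcongr), hΦ.monotone (by gcongr)⟩

/-- Accuracy-robustness trade-off bounds:
`Φ(ε/√λ_max + Φ⁻¹(P_e(θ))) ≤ P'_e(θ) ≤ Φ(ε/√λ_min + Φ⁻¹(P_e(θ)))`, where
`P_e(θ) = Φ(-θᵀμ/√(θᵀΣθ))` and `P'_e(θ) = Φ((ε‖θ‖₂ - θᵀμ)/√(θᵀΣθ))`. -/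
theorem accuracy_robustness_tradeoff {n : ℕ}
    (Φ Φinv : ℝ → ℝ) (hΦ : StrictMono Φ)
    (hrange : ∀ x, Φ x ∈ Set.Ioo (0 : ℝ) 1)
    (hinv : ∀ x, Φinv (Φ x) = x)
    (S : Matrix (Fin n) (Fin n) ℝ) (hSym : S.IsHermitian) (hS : S.PosDef)
    (lmin lmax : ℝ)
    (hlmin : IsLeast (Set.range hSym.eigenvalues) lmin)
    (hlmax : IsGreatest (Set.range hSym.eigenvalues) lmax)
    (θ μ : Fin n → ℝ) (hθ : θ ≠ 0) (ε : ℝ) (hε : 0 ≤ ε) :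
    Φ (ε / Real.sqrt lmax
        + Φinv (Φ (-vecDot θ μ / Real.sqrt (quadForm S θ))))
      ≤ Φ ((ε * vecNorm2 θ - vecDot θ μ) / Real.sqrt (quadForm S θ)) ∧
    Φ ((ε * vecNorm2 θ - vecDot θ μ) / Real.sqrt (quadForm S θ))
      ≤ Φ (ε / Real.sqrt lmin
        + Φinv (Φ (-vecDot θ μ / Real.sqrt (quadForm S θ)))) :=
  accuracy_robustness_tradeoff_general Φ Φinv hΦ hinv S hSym hS lmin lmax hlmin hlmax θ μ hθ ε hε
end
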